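/- arXiv:2208.04782 — 6 statements merged into one kernel-verified Lean document; each statement's English description precedes it below -/
import Mathlib

section
/- Whitney–McShane extension is an isometric embedding with respect to the sup distance: for any nonempty A ⊆ X and 1-Lipschitz functions f, g : A → ℝ, the sup distance between their Whitney–McShane extensions to X equals the sup distance between f and g on A. -/
/-- Whitney–McShane extension is an isometric embedding for the sup
distance: the sup distance on `X` between the extensions of `f` and `g`
equals the sup distance of `f` and `g` on `A`. -/
theorem stmt_6 {X : Type*} [MetricSpace X] (A : Set X) (hA : A.Nonempty)
    (f g : X → ℝ)
    (hf : ∀ a ∈ A, ∀ a' ∈ A, |f a - f a'| ≤ dist a a')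
    (hg : ∀ a ∈ A, ∀ a' ∈ A, |g a - g a'| ≤ dist a a') :
    (⨆ x : X, |sInf ((fun a => f a + dist a x) '' A)
        - sInf ((fun a => g a + dist a x) '' A)|)
      = ⨆ a : A, |f a - g a| := by
  obtain ⟨a0, ha0⟩ := hA
  have bdd : ∀ (φ : X → ℝ), (∀ a ∈ A, ∀ a' ∈ A, |φ a - φ a'| ≤ dist a a') →
      ∀ x, BddBelow ((fun a => φ a + dist a x) '' A) := by
    intro φ hφ x
    refine ⟨φ a0 - dist a0 x, ?_⟩
    rintro y ⟨a, ha, rfl⟩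
    have h1 := (abs_le.1 (hφ a0 ha0 a ha)).2
    have h2 := dist_triangle a0 x a
    have h3 := dist_comm x a
    simp only
    linarith
  have onA : ∀ (φ : X → ℝ), (∀ a ∈ A, ∀ a' ∈ A, |φ a - φ a'| ≤ dist a a') →
      ∀ a ∈ A, sInf ((fun a' => φ a' + dist a' a) '' A) = φ a := by
    intro φ hφ a ha
    apply le_antisymm
    · simpa using csInf_le (bdd φ hφ a) ⟨a, ha, by simp⟩
    · apply le_csInf (Set.Nonempty.image _ ⟨a, ha⟩)
      rintro y ⟨a', ha', rfl⟩
      have h1 := (abs_le.1 (hφ a ha a' ha')).2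
      have h2 : dist a a' = dist a' a := dist_comm a a'
      simp only
      linarith
  set F : X → ℝ := fun x => sInf ((fun a => f a + dist a x) '' A) with hF
  set G : X → ℝ := fun x => sInf ((fun a => g a + dist a x) '' A) with hG
  have key : ∀ M : ℝ, (∀ a ∈ A, |f a - g a| ≤ M) → ∀ x, |F x - G x| ≤ M := by
    intro M hM x
    rw [abs_le]
    constructor
    · have : G x ≤ F x + M := by
        have : G x - M ≤ F x := by
          apply le_csInf (Set.Nonempty.image _ ⟨a0, ha0⟩)
          rintro y ⟨a, ha, rfl⟩
          have h1 : G x ≤ g a + dist a x := csInf_le (bdd g hg x) ⟨a, ha, rfl⟩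
          have h2 := (abs_le.1 (hM a ha)).1
          simp only
          linarith
        linarith
      linarith
    · have : F x - M ≤ G x := by
        apply le_csInf (Set.Nonempty.image _ ⟨a0, ha0⟩)
        rintro y ⟨a, ha, rfl⟩
        have h1 : F x ≤ f a + dist a x := csInf_le (bdd f hf x) ⟨a, ha, rfl⟩
        have h2 := (abs_le.1 (hM a ha)).2
        simp only
        linarith
      linarith
  have eqA : ∀ a : A, |f a - g a| = |F a - G a| := by
    intro a
    rw [show F a = f a from onA f hf a a.2, show G a = g a from onA g hg a a.2]
  haveI : Nonempty X := ⟨a0⟩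
  haveI : Nonempty A := ⟨⟨a0, ha0⟩⟩
  by_cases hb : BddAbove (Set.range fun a : A => |f (a : X) - g a|)
  · have hM : ∀ a ∈ A, |f a - g a| ≤ ⨆ a : A, |f (a : X) - g a| := fun a ha =>
      le_ciSup hb (⟨a, ha⟩ : A)
    apply le_antisymm
    · exact ciSup_le (key _ hM)
    · apply ciSup_le
      intro a
      rw [eqA a]
      exact le_ciSup ⟨_, by rintro y ⟨x, rfl⟩; exact key _ hM x⟩ (a : X)
  · rw [Real.iSup_of_not_bddAbove hb]
    apply Real.iSup_of_not_bddAbove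
    intro hb'
    apply hb
    obtain ⟨M, hM⟩ := hb'
    refine ⟨M, ?_⟩
    rintro y ⟨a, rfl⟩
    show |f a.1 - g a.1| ≤ M
    rw [eqA a]
    exact hM ⟨a, rfl⟩
end

section
/- If f : A → ℝ is 1-Lipschitz on a nonempty subset A of a metric space X and satisfies d(a,a') ≤ f(a) + f(a') for all a, a' ∈ A, then its Whitney–McShane extension f̃(x) = inf_{a ∈ A} (f(a) + d(a,x)) satisfies d(x,y) ≤ f̃(x) + f̃(y) for all x, y ∈ X. -/
/-- If `f ∈ Δ¹(A)` then its Whitney–McShane extension lies in `Δ(X)`. -/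
theorem stmt_7 {X : Type*} [MetricSpace X] (A : Set X) (hA : A.Nonempty)
    (f : X → ℝ) (hf : ∀ a ∈ A, ∀ a' ∈ A, |f a - f a'| ≤ dist a a')
    (hΔ : ∀ a ∈ A, ∀ a' ∈ A, dist a a' ≤ f a + f a') :
    ∀ x y : X, dist x y ≤ sInf ((fun a => f a + dist a x) '' A)
      + sInf ((fun a => f a + dist a y) '' A) := by
  intro x y
  rw [← sub_le_iff_le_add']
  apply le_csInf (hA.image _)
  rintro _ ⟨a, ha, rfl⟩
  rw [sub_le_iff_le_add']
  rw [← sub_le_iff_le_add]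
  apply le_csInf (hA.image _)
  rintro _ ⟨a', ha', rfl⟩
  rw [sub_le_iff_le_add]
  have h1 := hΔ a ha a' ha'
  have := dist_triangle4 x a a' y
  simp only at *; nlinarith [dist_comm x a, dist_comm a' y, dist_triangle4 x a' a y, hΔ a' ha' a ha, dist_comm x a', dist_comm a y]
end

section
/- Let A, B be nonempty subsets of a metric space X, and let f : X → ℝ be 1-Lipschitz. Denote by E_A(f) the Whitney–McShane extension of f|_A to X, and E_B(f) that of f|_B. Then sup_{x ∈ X} |E_A(f)(x) − E_B(f)(x)| ≤ 2 d_H(A, B), where d_H is the Hausdorff distance in X. -/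
/-!
Each Whitney–McShane extension `E_S f` is an infimum over `S`, so it suffices to compare the
terms. Given `a ∈ A`, pick `b ∈ B` with `dist a b < d_H(A, B) + ε`; since `f` is 1-Lipschitz,
`f b + dist b x ≤ f a + dist a x + 2 * dist a b`, whence `E_B f x ≤ E_A f x + 2 d_H(A, B)`,
and symmetrically.
-/

open Metric

section

variable {X : Type*} [PseudoMetricSpace X]

noncomputable def mcShaneExtension (f : X → ℝ) (S : Set X) (x : X) : ℝ :=
  sInf ((fun s => f s + dist s x) '' S)

theorem bddBelow_image_add_dist {f : X → ℝ} (hf : LipschitzWith 1 f) (S : Set X) (x : X) :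
    BddBelow ((fun s => f s + dist s x) '' S) := by
  refine ⟨f x, ?_⟩
  rintro _ ⟨s, -, rfl⟩
  simpa [dist_comm] using hf.le_add_mul x s

theorem mcShaneExtension_le {f : X → ℝ} (hf : LipschitzWith 1 f) {S : Set X} {s : X}
    (hs : s ∈ S) (x : X) : mcShaneExtension f S x ≤ f s + dist s x :=
  csInf_le (bddBelow_image_add_dist hf S x) ⟨s, hs, rfl⟩

theorem mcShaneExtension_le_add_two_hausdorffDist {f : X → ℝ} (hf : LipschitzWith 1 f)
    {A B : Set X} (hA : A.Nonempty) (hfin : hausdorffEDist A B ≠ ⊤) (x : X) :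
    mcShaneExtension f B x ≤ mcShaneExtension f A x + 2 * hausdorffDist A B := by
  rw [← sub_le_iff_le_add]
  refine le_csInf (hA.image _) ?_
  rintro _ ⟨a, ha, rfl⟩
  rw [sub_le_iff_le_add]
  refine le_of_forall_pos_le_add fun ε hε => ?_
  obtain ⟨b, hb, hab⟩ := exists_dist_lt_of_hausdorffDist_lt ha
    (lt_add_of_pos_right (hausdorffDist A B) (half_pos hε)) hfin
  have hfba : f b ≤ f a + dist b a := by simpa using hf.le_add_mul b a
  calc mcShaneExtension f B x ≤ f b + dist b x := mcShaneExtension_le hf hb x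
    _ ≤ f a + dist b a + (dist b a + dist a x) := add_le_add hfba (dist_triangle b a x)
    _ ≤ f a + dist a x + 2 * hausdorffDist A B + ε := by rw [dist_comm b a]; linarith

theorem abs_mcShaneExtension_sub_le_two_hausdorffDist {f : X → ℝ} (hf : LipschitzWith 1 f)
    {A B : Set X} (hfin : hausdorffEDist A B ≠ ⊤) (x : X) :
    |mcShaneExtension f A x - mcShaneExtension f B x| ≤ 2 * hausdorffDist A B := by
  rcases empty_or_nonempty_of_hausdorffEDist_ne_top hfin with ⟨rfl, rfl⟩ | ⟨hA, hB⟩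
  · simp [mcShaneExtension] -- both sides are the junk value `sInf ∅ = 0`
  rw [abs_sub_le_iff]
  constructor
  · have hfin' : hausdorffEDist B A ≠ ⊤ := by rwa [hausdorffEDist_comm]
    have h := mcShaneExtension_le_add_two_hausdorffDist hf hB hfin' x
    rw [hausdorffDist_comm] at h
    linarith
  · linarith [mcShaneExtension_le_add_two_hausdorffDist hf hA hfin x]

end

theorem stmt_8_general {X : Type*} [MetricSpace X] (A B : Set X)
    (hfin : EMetric.hausdorffEdist A B ≠ ⊤)
    (f : X → ℝ) (hf : ∀ x y : X, |f x - f y| ≤ dist x y) :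
    ∀ x : X, |sInf ((fun a => f a + dist a x) '' A)
        - sInf ((fun b => f b + dist b x) '' B)|
      ≤ 2 * Metric.hausdorffDist A B :=
  abs_mcShaneExtension_sub_le_two_hausdorffDist
    (LipschitzWith.of_dist_le_mul fun x y => by simpa [Real.dist_eq] using hf x y) hfin

/-- Whitney–McShane extensions from two subsets differ by at most twice the
Hausdorff distance between the subsets. -/
theorem stmt_8 {X : Type*} [MetricSpace X] (A B : Set X)
    (hA : A.Nonempty) (hB : B.Nonempty)
    (hfin : EMetric.hausdorffEdist A B ≠ ⊤)
    (f : X → ℝ) (hf : ∀ x y : X, |f x - f y| ≤ dist x y) :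
    ∀ x : X, |sInf ((fun a => f a + dist a x) '' A)
        - sInf ((fun b => f b + dist b x) '' B)|
      ≤ 2 * Metric.hausdorffDist A B :=
  stmt_8_general A B hfin f hf
end

section
/- If U and B are metric spaces with B having at least two points, U being a Urysohn space, and U × B endowed with the max metric, then the projection π_B : U × B → B is not a Urysohn field: there exist a finite subset A of U × B, a one-point metric extension A* = A ⊔ {a*}, and a 1-Lipschitz map φ : A* → B extending π_B|_A, such that no isometric embedding ι : A* → U × B restricting to the inclusion on A satisfies π_B ∘ ι = φ. -/
/-- If `U` is a Urysohn space (encoded via the finite one-point extension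
property) and `B` has at least two points, then the projection
`π_B : U × B → B` (max metric) is not a Urysohn field: there is a finite
`A ⊆ U × B`, a one-point metric extension of `A` given by the distance
function `f : A → ℝ` to the new point, and a value `b* ∈ B` making the map
sending the new point to `b*` (and restricting to `π_B` on `A`) 1-Lipschitz,
such that no point `z ∈ U × B` realizes the extension over `B`. -/
theorem stmt_14 {U B : Type*} [MetricSpace U] [MetricSpace B]
    (hU : ∀ (S : Set U), S.Finite → ∀ g : U → ℝ,
      (∀ s ∈ S, ∀ s' ∈ S, |g s - g s'| ≤ dist s s' ∧ dist s s' ≤ g s + g s') →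
      (∀ s ∈ S, 0 ≤ g s) →
      ∃ u : U, ∀ s ∈ S, dist u s = g s)
    (hB : ∃ b₀ b₁ : B, b₀ ≠ b₁) :
    ∃ (A : Set (U × B)) (f : U × B → ℝ) (bstar : B),
      A.Finite ∧
      (∀ a ∈ A, ∀ a' ∈ A, |f a - f a'| ≤ dist a a' ∧ dist a a' ≤ f a + f a') ∧
      (∀ a ∈ A, 0 ≤ f a) ∧
      (∀ a ∈ A, dist bstar a.2 ≤ f a) ∧
      ¬ ∃ z : U × B, z.2 = bstar ∧ ∀ a ∈ A, dist z a = f a := by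
  obtain ⟨b₀, b₁, hb⟩ := hB
  -- U is nonempty by the empty-set instance of hU
  obtain ⟨u, -⟩ := hU ∅ Set.finite_empty 0 (by simp) (by simp)
  set d : ℝ := dist b₀ b₁ with hd
  have hd0 : 0 < d := dist_pos.mpr hb
  refine ⟨{(u, b₀), (u, b₁)}, fun p => d + dist b₀ p.2, b₀,
    (Set.finite_singleton _).insert _, ?_, ?_, ?_, ?_⟩
  · intro a _ a' _
    constructor
    · have h1 : |dist b₀ a.2 - dist b₀ a'.2| ≤ dist a.2 a'.2 := by
        have := abs_dist_sub_le a.2 a'.2 b₀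
        rwa [dist_comm a.2 b₀, dist_comm a'.2 b₀] at this
      have h2 : dist a.2 a'.2 ≤ dist a a' := le_max_right _ _
      have : (d + dist b₀ a.2) - (d + dist b₀ a'.2) = dist b₀ a.2 - dist b₀ a'.2 := by ring
      rw [this]
      exact h1.trans h2
    · rcases (by simpa using ‹a ∈ ({(u, b₀), (u, b₁)} : Set (U × B))›) with h | h <;>
      rcases (by simpa using ‹a' ∈ ({(u, b₀), (u, b₁)} : Set (U × B))›) with h' | h' <;>
      subst h <;> subst h' <;>
      simp [Prod.dist_eq, dist_comm, hd.symm] <;> first | (constructor <;> linarith) | linarith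
  · intro a _
    have := dist_nonneg (x := b₀) (y := a.2)
    show (0:ℝ) ≤ d + dist b₀ a.2
    linarith
  · intro a _
    show dist b₀ a.2 ≤ d + dist b₀ a.2
    linarith
  · rintro ⟨z, hz2, hz⟩
    have h1 := hz (u, b₀) (by simp)
    have h2 := hz (u, b₁) (by simp)
    rw [Prod.dist_eq, hz2] at h1 h2
    simp only [dist_self, max_eq_left dist_nonneg] at h1
    have : dist z.1 u ≤ d := by simp at h1; linarith
    rw [max_eq_right (by simpa [hd] using this)] at h2
    simp only [← hd] at h2
    linarith
end

section
/- Let X, Y, B be metric spaces with 1-Lipschitz maps π_X : X → B, π_Y : Y → B, let P be a Borel probability coupling of Borel probability measures μ_X, μ_Y, and suppose r := max{ (1/2) sup over supp(P⊗P) of |d_X(x,x') − d_Y(y,y')|, sup over supp P of d_B(π_X(x), π_Y(y)) } is finite. Define Z = X ⊔ Y with d_Z restricting to d_X and d_Y, and d_Z(x,y) = r + inf_{(x',y') ∈ supp P} (d_X(x,x') + d_Y(y,y')) for x ∈ X, y ∈ Y. Then d_Z is a metric on Z and the map π_Z : Z → B defined by π_X on X and π_Y on Y is 1-Lipschitz with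 respect to d_Z. -/
open MeasureTheory

/-- The support of a Borel measure: points all of whose open neighborhoods
have positive measure. -/
def measSupport {Z : Type*} [TopologicalSpace Z] [MeasurableSpace Z]
    (P : Measure Z) : Set Z :=
  {z | ∀ O : Set Z, IsOpen O → z ∈ O → P O ≠ 0}

lemma measSupport_nonempty {Z : Type*} [TopologicalSpace Z]
    [SecondCountableTopology Z] [MeasurableSpace Z]
    (P : Measure Z) [IsProbabilityMeasure P] : (measSupport P).Nonempty := by
  by_contra h
  rw [Set.not_nonempty_iff_eq_empty] at h
  have hcov : ∀ z : Z, ∃ O : Set Z, IsOpen O ∧ z ∈ O ∧ P O = 0 := by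
    intro z
    have hz : z ∉ measSupport P := by rw [h]; exact Set.notMem_empty z
    simp only [measSupport, Set.mem_setOf_eq, not_forall] at hz
    obtain ⟨O, hO, hzO, hPO⟩ := hz
    exact ⟨O, hO, hzO, by simpa using hPO⟩
  obtain ⟨T, hTc, hT𝒪, hTU⟩ := TopologicalSpace.isOpen_sUnion_countable
    {O : Set Z | IsOpen O ∧ P O = 0} (fun s hs => hs.1)
  have hUuniv : ⋃₀ T = Set.univ := by
    rw [hTU]
    apply Set.eq_univ_of_forall
    intro z
    obtain ⟨O, hO, hzO, hPO⟩ := hcov z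
    exact ⟨O, ⟨hO, hPO⟩, hzO⟩
  have : P Set.univ = 0 := by
    rw [← hUuniv, measure_sUnion_null_iff hTc]
    exact fun s hs => (hT𝒪 hs).2
  simp [measure_univ] at this

/-- The glued distance on `Z = X ⊔ Y` determined by a parameter `r` and a set
`S ⊆ X × Y` (intended to be the support of a coupling):
`d_Z(x,y) = r + inf_{(x',y') ∈ S} (d_X(x,x') + d_Y(y,y'))`. -/
noncomputable def glueD {X Y : Type*} [MetricSpace X] [MetricSpace Y]
    (r : ℝ) (S : Set (X × Y)) : X ⊕ Y → X ⊕ Y → ℝ := fun z w =>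
  match z, w with
  | .inl x, .inl x' => dist x x'
  | .inr y, .inr y' => dist y y'
  | .inl x, .inr y => r + sInf ((fun p : X × Y => dist x p.1 + dist y p.2) '' S)
  | .inr y, .inl x => r + sInf ((fun p : X × Y => dist x p.1 + dist y p.2) '' S)

/-- Given `mm`-fields over `B` and a coupling `P` of `μ_X`, `μ_Y` with
`r = max{ (1/2) sup_{supp(P⊗P)} |d_X(x,x') − d_Y(y,y')|,
sup_{supp P} d_B(π_X x, π_Y y) }` finite, the glued distance on `X ⊔ Y` is a
metric (zero on the diagonal, symmetric, triangle inequality) and the map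
`π_Z = π_X ⊔ π_Y` is 1-Lipschitz for it.  Moreover `d_{W,∞}`-type bounds
follow since `d_Z(x,y) = r` on the support. -/
theorem stmt_17 {X Y B : Type*}
    [MetricSpace X] [CompleteSpace X] [TopologicalSpace.SeparableSpace X]
    [MeasurableSpace X] [BorelSpace X]
    [MetricSpace Y] [CompleteSpace Y] [TopologicalSpace.SeparableSpace Y]
    [MeasurableSpace Y] [BorelSpace Y]
    [MetricSpace B]
    (πX : X → B) (πY : Y → B)
    (hπX : LipschitzWith 1 πX) (hπY : LipschitzWith 1 πY)
    (μX : Measure X) (μY : Measure Y)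
    [IsProbabilityMeasure μX] [IsProbabilityMeasure μY]
    (P : Measure (X × Y)) [IsProbabilityMeasure P]
    (hfst : P.map Prod.fst = μX) (hsnd : P.map Prod.snd = μY)
    (M D : Set ℝ)
    (hM : M = {c | ∃ p ∈ measSupport P, ∃ q ∈ measSupport P,
      c = (1 / 2) * |dist p.1 q.1 - dist p.2 q.2|})
    (hD : D = {c | ∃ p ∈ measSupport P, c = dist (πX p.1) (πY p.2)})
    (hMb : BddAbove M) (hDb : BddAbove D)
    (r : ℝ) (hr : r = max (sSup M) (sSup D)) :
    (∀ z : X ⊕ Y, glueD r (measSupport P) z z = 0) ∧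
    (∀ z w : X ⊕ Y, glueD r (measSupport P) z w = glueD r (measSupport P) w z) ∧
    (∀ z w v : X ⊕ Y, glueD r (measSupport P) z v
      ≤ glueD r (measSupport P) z w + glueD r (measSupport P) w v) ∧
    (∀ z w : X ⊕ Y,
      dist (Sum.elim πX πY z) (Sum.elim πX πY w) ≤ glueD r (measSupport P) z w) := by
  set S := measSupport P with hSdef
  have hS : S.Nonempty := measSupport_nonempty P
  set g : X → Y → ℝ := fun x y =>
    sInf ((fun p : X × Y => dist x p.1 + dist y p.2) '' S) with hg
  have hne : ∀ (x : X) (y : Y),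
      ((fun p : X × Y => dist x p.1 + dist y p.2) '' S).Nonempty :=
    fun x y => hS.image _
  have hbdd : ∀ (x : X) (y : Y),
      BddBelow ((fun p : X × Y => dist x p.1 + dist y p.2) '' S) := by
    intro x y
    refine ⟨0, ?_⟩
    rintro _ ⟨p, _, rfl⟩
    positivity
  have hgle : ∀ (x : X) (y : Y), ∀ p ∈ S, g x y ≤ dist x p.1 + dist y p.2 :=
    fun x y p hp => csInf_le (hbdd x y) ⟨p, hp, rfl⟩
  have hleg : ∀ (x : X) (y : Y) (c : ℝ),
      (∀ p ∈ S, c ≤ dist x p.1 + dist y p.2) → c ≤ g x y := by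
    intro x y c hc
    refine le_csInf (hne x y) ?_
    rintro _ ⟨p, hp, rfl⟩
    exact hc p hp
  -- key bounds from r
  have hrD : ∀ p ∈ S, dist (πX p.1) (πY p.2) ≤ r := by
    intro p hp
    have : dist (πX p.1) (πY p.2) ∈ D := by rw [hD]; exact ⟨p, hp, rfl⟩
    calc dist (πX p.1) (πY p.2) ≤ sSup D := le_csSup hDb this
    _ ≤ r := by rw [hr]; exact le_max_right _ _
  have hrM : ∀ p ∈ S, ∀ q ∈ S, |dist p.1 q.1 - dist p.2 q.2| ≤ 2 * r := by
    intro p hp q hq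
    have hmem : (1 / 2 : ℝ) * |dist p.1 q.1 - dist p.2 q.2| ∈ M := by
      rw [hM]; exact ⟨p, hp, q, hq, rfl⟩
    have h1 : (1 / 2 : ℝ) * |dist p.1 q.1 - dist p.2 q.2| ≤ r := by
      calc (1 / 2 : ℝ) * |dist p.1 q.1 - dist p.2 q.2| ≤ sSup M := le_csSup hMb hmem
      _ ≤ r := by rw [hr]; exact le_max_left _ _
    linarith
  refine ⟨?_, ?_, ?_, ?_⟩
  · rintro (x | y) <;> simp [glueD]
  · rintro (x | y) (x' | y') <;> simp [glueD, dist_comm]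
  · -- triangle inequality
    rintro (x | y) (x' | y') (x'' | y'') <;>
      simp only [glueD]
    · exact dist_triangle _ _ _
    · -- l l r : r + g x y'' ≤ dist x x' + (r + g x' y'')
      have : g x y'' - dist x x' ≤ g x' y'' := by
        refine hleg _ _ _ fun p hp => ?_
        have := hgle x y'' p hp
        have := dist_triangle x x' p.1
        linarith
      linarith [this]
    · -- l r l : dist x x'' ≤ (r + g x y') + (r + g x'' y')
      have : dist x x'' - 2 * r - g x'' y' ≤ g x y' := by
        refine hleg _ _ _ fun p hp => ?_
        have : dist x x'' - 2 * r - (dist x p.1 + dist y' p.2) ≤ g x'' y' := by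
          refine hleg _ _ _ fun q hq => ?_
          have h1 := dist_triangle4 x p.1 q.1 x''
          have h2 := abs_le.mp (hrM p hp q hq)
          have h3 := dist_triangle p.2 y' q.2
          have h4 := dist_comm q.1 x''
          have h5 := dist_comm y' p.2
          have h6 := dist_comm q.2 y'
          -- dist p.2 q.2 bounds dist p.1 q.1 up to 2r
          linarith [h1, h2.1, h2.2, h3]
        linarith
      linarith [this]
    · -- l r r : r + g x y'' ≤ (r + g x y') + dist y' y''
      have : g x y'' - dist y' y'' ≤ g x y' := by
        refine hleg _ _ _ fun p hp => ?_
        have := hgle x y'' p hp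
        have := dist_triangle y'' y' p.2
        have := dist_comm y'' y'
        linarith
      linarith [this]
    · -- r l l : r + g x'' y ≤ (r + g x' y) + dist x' x''
      have : g x'' y - dist x' x'' ≤ g x' y := by
        refine hleg _ _ _ fun p hp => ?_
        have := hgle x'' y p hp
        have := dist_triangle x'' x' p.1
        have := dist_comm x'' x'
        linarith
      linarith [this]
    · -- r l r : dist y y'' ≤ (r + g x' y) + (r + g x' y'')
      have : dist y y'' - 2 * r - g x' y'' ≤ g x' y := by
        refine hleg _ _ _ fun p hp => ?_
        have : dist y y'' - 2 * r - (dist x' p.1 + dist y p.2) ≤ g x' y'' := by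
          refine hleg _ _ _ fun q hq => ?_
          have h1 := dist_triangle4 y p.2 q.2 y''
          have h2 := abs_le.mp (hrM p hp q hq)
          have h3 := dist_triangle p.1 x' q.1
          have h4 := dist_comm q.2 y''
          have h5 := dist_comm x' p.1
          have h6 := dist_comm q.1 x'
          linarith [h1, h2.1, h2.2, h3]
        linarith
      linarith [this]
    · -- r r l : r + g x'' y ≤ dist y y' + (r + g x'' y')
      have : g x'' y - dist y y' ≤ g x'' y' := by
        refine hleg _ _ _ fun p hp => ?_
        have := hgle x'' y p hp
        have := dist_triangle y y' p.2
        linarith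
      linarith [this]
    · exact dist_triangle _ _ _
  · -- Lipschitz
    have hlipX : ∀ a b : X, dist (πX a) (πX b) ≤ dist a b := by
      intro a b
      have := hπX.dist_le_mul a b
      simpa using this
    have hlipY : ∀ a b : Y, dist (πY a) (πY b) ≤ dist a b := by
      intro a b
      have := hπY.dist_le_mul a b
      simpa using this
    rintro (x | y) (x' | y') <;> simp only [glueD, Sum.elim_inl, Sum.elim_inr]
    · exact hlipX x x'
    · -- dist (πX x) (πY y') ≤ r + g x y'
      have : dist (πX x) (πY y') - r ≤ g x y' := by
        refine hleg _ _ _ fun p hp => ?_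
        have h1 := dist_triangle4 (πX x) (πX p.1) (πY p.2) (πY y')
        have h2 := hlipX x p.1
        have h3 := hrD p hp
        have h4 := hlipY p.2 y'
        have h5 := dist_comm (πY p.2) (πY y')
        have h6 := dist_comm p.2 y'
        have h7 := dist_comm (πY y') (πY p.2)
        linarith
      linarith [this]
    · have : dist (πY y) (πX x') - r ≤ g x' y := by
        refine hleg _ _ _ fun p hp => ?_
        have h1 := dist_triangle4 (πY y) (πY p.2) (πX p.1) (πX x')
        have h2 := hlipY y p.2
        have h3 := hrD p hp
        have h4 := hlipX p.1 x'
        have h5 := dist_comm (πY p.2) (πX p.1)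
        have h6 := dist_comm (πX p.1) (πY p.2)
        have h7 := dist_comm p.1 x'
        linarith
      linarith [this]
    · exact hlipY y y'
end

section
/- Let π : U → B be a Urysohn B-field. Then any finite partial isometric matching of π extends to an automorphism: if A, A' are finite subsets of U and φ : A → A' is a bijective isometry with π ∘ φ = π|_A, then there exists a bijective isometry ψ : U → U extending φ with π ∘ ψ = π. -/
open TopologicalSpace

section Aux

variable {U B : Type*} [MetricSpace U] [MetricSpace B]

/-- A "good" finite partial isometry extending `φ : A → U` and preserving `π`. -/
def GoodPI (π : U → B) (A : Set U) (φ : U → U) (p : Set U × (U → U)) : Prop :=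
  p.1.Finite ∧ (∀ s ∈ p.1, ∀ t ∈ p.1, dist (p.2 s) (p.2 t) = dist s t) ∧
  (∀ s ∈ p.1, π (p.2 s) = π s) ∧ A ⊆ p.1 ∧ (∀ a ∈ A, p.2 a = φ a)

variable {π : U → B} {A : Set U} {φ : U → U}

theorem GoodPI.injOn {p : Set U × (U → U)} (hp : GoodPI π A φ p) :
    Set.InjOn p.2 p.1 := by
  intro s hs t ht h
  have h2 := hp.2.1 s hs t ht
  rw [h, dist_self] at h2
  exact eq_of_dist_eq_zero h2.symm

theorem GoodPI.forth (hπ : LipschitzWith 1 π)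
    (hUry : ∀ (S : Set U), S.Finite → ∀ (f : U → ℝ) (b : B),
      (∀ a ∈ S, ∀ a' ∈ S, |f a - f a'| ≤ dist a a' ∧ dist a a' ≤ f a + f a') →
      (∀ a ∈ S, 0 ≤ f a) →
      (∀ a ∈ S, dist b (π a) ≤ f a) →
      ∃ u : U, π u = b ∧ ∀ a ∈ S, dist u a = f a)
    {p : Set U × (U → U)} (hp : GoodPI π A φ p) (u : U) :
    ∃ q, GoodPI π A φ q ∧ p.1 ⊆ q.1 ∧ (∀ s ∈ p.1, q.2 s = p.2 s) ∧ u ∈ q.1 := by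
  classical
  obtain ⟨hfin, hisop, hfib, hAs, hφp⟩ := hp
  haveI : Nonempty U := ⟨u⟩
  set S := p.1 with hS
  set g := p.2 with hg
  have hinj : Set.InjOn g S := GoodPI.injOn ⟨hfin, hisop, hfib, hAs, hφp⟩
  set f : U → ℝ := fun x => dist u (Function.invFunOn g S x) with hf
  have hfval : ∀ s ∈ S, f (g s) = dist u s := by
    intro s hs
    simp only [hf]
    rw [hinj.leftInvOn_invFunOn hs]
  obtain ⟨v, hv1, hv2⟩ := hUry (g '' S) (hfin.image g) f (π u)
    (by
      rintro a ⟨s, hs, rfl⟩ a' ⟨t, ht, rfl⟩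
      rw [hfval s hs, hfval t ht, hisop s hs t ht]
      constructor
      · have := abs_dist_sub_le s t u
        rwa [dist_comm s u, dist_comm t u] at this
      · calc dist s t ≤ dist s u + dist u t := dist_triangle s u t
          _ = dist u s + dist u t := by rw [dist_comm s u]
          _ ≤ _ := by rw [dist_comm u t])
    (by rintro a ⟨s, hs, rfl⟩; rw [hfval s hs]; exact dist_nonneg)
    (by
      rintro a ⟨s, hs, rfl⟩
      rw [hfval s hs, hfib s hs]
      have := hπ.dist_le_mul u s
      simpa using this)
  have key : ∀ s ∈ S, Function.update g u v s = g s := by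
    intro s hs
    rcases eq_or_ne s u with rfl | h
    · rw [Function.update_self]
      have := hv2 (g s) ⟨s, hs, rfl⟩
      rw [hfval s hs, dist_self] at this
      exact eq_of_dist_eq_zero this
    · rw [Function.update_of_ne h]
  have hvu : Function.update g u v u = v := Function.update_self u v g
  refine ⟨(insert u S, Function.update g u v),
    ⟨hfin.insert u, ?_, ?_, hAs.trans (Set.subset_insert u S), ?_⟩,
    Set.subset_insert u S, key, Set.mem_insert u S⟩
  · dsimp only
    rintro s (rfl | hs) t (rfl | ht)
    · simp
    · rw [hvu, key t ht, hv2 (g t) ⟨t, ht, rfl⟩, hfval t ht]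
    · rw [hvu, key s hs, dist_comm, hv2 (g s) ⟨s, hs, rfl⟩, hfval s hs, dist_comm]
    · rw [key s hs, key t ht]; exact hisop s hs t ht
  · dsimp only
    rintro s (rfl | hs)
    · rw [hvu, hv1]
    · rw [key s hs]; exact hfib s hs
  · dsimp only
    intro a ha; rw [key a (hAs ha)]; exact hφp a ha

theorem GoodPI.back (hπ : LipschitzWith 1 π)
    (hUry : ∀ (S : Set U), S.Finite → ∀ (f : U → ℝ) (b : B),
      (∀ a ∈ S, ∀ a' ∈ S, |f a - f a'| ≤ dist a a' ∧ dist a a' ≤ f a + f a') →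
      (∀ a ∈ S, 0 ≤ f a) →
      (∀ a ∈ S, dist b (π a) ≤ f a) →
      ∃ u : U, π u = b ∧ ∀ a ∈ S, dist u a = f a)
    {p : Set U × (U → U)} (hp : GoodPI π A φ p) (u : U) :
    ∃ q, GoodPI π A φ q ∧ p.1 ⊆ q.1 ∧ (∀ s ∈ p.1, q.2 s = p.2 s) ∧ u ∈ q.2 '' q.1 := by
  classical
  obtain ⟨hfin, hisop, hfib, hAs, hφp⟩ := hp
  set S := p.1 with hS
  set g := p.2 with hg
  obtain ⟨v, hv1, hv2⟩ := hUry S hfin (fun x => dist u (g x)) (π u)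
    (by
      intro s hs t ht
      constructor
      · have h1 := abs_dist_sub_le (g s) (g t) u
        rw [dist_comm (g s) u, dist_comm (g t) u, hisop s hs t ht] at h1
        exact h1
      · calc dist s t = dist (g s) (g t) := (hisop s hs t ht).symm
          _ ≤ dist (g s) u + dist u (g t) := dist_triangle _ _ _
          _ = dist u (g s) + dist u (g t) := by rw [dist_comm (g s) u])
    (fun s hs => dist_nonneg)
    (by
      intro s hs
      rw [← hfib s hs]
      have := hπ.dist_le_mul u (g s)
      simpa using this)
  have hgv : v ∈ S → u = g v := by
    intro hvS
    have := hv2 v hvS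
    rw [dist_self] at this
    exact eq_of_dist_eq_zero this.symm
  have key : ∀ s ∈ S, Function.update g v u s = g s := by
    intro s hs
    rcases eq_or_ne s v with rfl | h
    · rw [Function.update_self]; exact hgv hs
    · rw [Function.update_of_ne h]
  have hvu : Function.update g v u v = u := Function.update_self v u g
  refine ⟨(insert v S, Function.update g v u),
    ⟨hfin.insert v, ?_, ?_, hAs.trans (Set.subset_insert v S), ?_⟩,
    Set.subset_insert v S, key, ⟨v, Set.mem_insert v S, hvu⟩⟩
  · dsimp only
    rintro s (rfl | hs) t (rfl | ht)
    · simp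
    · rw [hvu, key t ht, ← hv2 t ht, dist_comm]
    · rw [hvu, key s hs, dist_comm (g s) u, ← hv2 s hs, dist_comm]
    · rw [key s hs, key t ht]; exact hisop s hs t ht
  · dsimp only
    rintro s (rfl | hs)
    · rw [hvu, ← hv1]
    · rw [key s hs]; exact hfib s hs
  · dsimp only
    intro a ha; rw [key a (hAs ha)]; exact hφp a ha

theorem GoodPI.step (hπ : LipschitzWith 1 π)
    (hUry : ∀ (S : Set U), S.Finite → ∀ (f : U → ℝ) (b : B),
      (∀ a ∈ S, ∀ a' ∈ S, |f a - f a'| ≤ dist a a' ∧ dist a a' ≤ f a + f a') →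
      (∀ a ∈ S, 0 ≤ f a) →
      (∀ a ∈ S, dist b (π a) ≤ f a) →
      ∃ u : U, π u = b ∧ ∀ a ∈ S, dist u a = f a)
    (p : Set U × (U → U)) (hp : GoodPI π A φ p) (u : U) :
    ∃ q, GoodPI π A φ q ∧ p.1 ⊆ q.1 ∧ (∀ s ∈ p.1, q.2 s = p.2 s) ∧ u ∈ q.1 ∧
      u ∈ q.2 '' q.1 := by
  obtain ⟨q1, hq1, hsub1, hag1, hmem1⟩ := GoodPI.forth hπ hUry hp u
  obtain ⟨q2, hq2, hsub2, hag2, himg2⟩ := GoodPI.back hπ hUry hq1 u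
  exact ⟨q2, hq2, hsub1.trans hsub2, fun s hs => (hag2 s (hsub1 hs)).trans (hag1 s hs),
    hsub2 hmem1, himg2⟩

end Aux

/-- For a Urysohn `B`-field `π : U → B` (encoded via the one-point extension
property for finite subsets), every finite partial isometric matching extends
to an automorphism of the field. -/
theorem stmt_18 {U B : Type*}
    [MetricSpace U] [CompleteSpace U] [SeparableSpace U]
    [MetricSpace B] [CompleteSpace B] [SeparableSpace B]
    (π : U → B) (hπ : LipschitzWith 1 π)
    (hUry : ∀ (A : Set U), A.Finite → ∀ (f : U → ℝ) (b : B),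
      (∀ a ∈ A, ∀ a' ∈ A, |f a - f a'| ≤ dist a a' ∧ dist a a' ≤ f a + f a') →
      (∀ a ∈ A, 0 ≤ f a) →
      (∀ a ∈ A, dist b (π a) ≤ f a) →
      ∃ u : U, π u = b ∧ ∀ a ∈ A, dist u a = f a)
    (A A' : Set U) (hA : A.Finite) (hA' : A'.Finite)
    (φ : U → U) (hbij : Set.BijOn φ A A')
    (hiso : ∀ a ∈ A, ∀ a' ∈ A, dist (φ a) (φ a') = dist a a')
    (hmatch : ∀ a ∈ A, π (φ a) = π a) :
    ∃ ψ : U → U, Function.Bijective ψ ∧ Isometry ψ ∧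
      (∀ a ∈ A, ψ a = φ a) ∧ ∀ u : U, π (ψ u) = π u := by
  classical
  rcases isEmpty_or_nonempty U with hU | hU
  · exact ⟨id, Function.bijective_id, isometry_id, fun a _ => (hU.false a).elim,
      fun u => (hU.false u).elim⟩
  obtain ⟨seq, hseq⟩ := TopologicalSpace.exists_dense_seq U
  have good0 : GoodPI π A φ (A, φ) := ⟨hA, hiso, hmatch, subset_rfl, fun a _ => rfl⟩
  choose step hgood hsub hagree hmem himg using GoodPI.step (π := π) (A := A) (φ := φ) hπ hUry
  let c : ℕ → {p : Set U × (U → U) // GoodPI π A φ p} := fun n =>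
    Nat.rec ⟨(A, φ), good0⟩ (fun n p => ⟨step p.1 p.2 (seq n), hgood p.1 p.2 (seq n)⟩) n
  have hsub' : ∀ n, (c n).1.1 ⊆ (c (n + 1)).1.1 := fun n => hsub (c n).1 (c n).2 (seq n)
  have hagree' : ∀ n, ∀ s ∈ (c n).1.1, (c (n + 1)).1.2 s = (c n).1.2 s :=
    fun n => hagree (c n).1 (c n).2 (seq n)
  have hmem' : ∀ n, seq n ∈ (c (n + 1)).1.1 := fun n => hmem (c n).1 (c n).2 (seq n)
  have himg' : ∀ n, seq n ∈ (c (n + 1)).1.2 '' (c (n + 1)).1.1 :=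
    fun n => himg (c n).1 (c n).2 (seq n)
  have mono : ∀ m n, m ≤ n →
      (c m).1.1 ⊆ (c n).1.1 ∧ ∀ s ∈ (c m).1.1, (c n).1.2 s = (c m).1.2 s := by
    intro m n h
    induction h with
    | refl => exact ⟨subset_rfl, fun s _ => rfl⟩
    | @step k hk ih =>
      exact ⟨ih.1.trans (hsub' k), fun s hs =>
        (hagree' k s (ih.1 hs)).trans (ih.2 s hs)⟩
  set D : Set U := ⋃ n, (c n).1.1 with hD
  set G : U → U := fun u =>
    if h : ∃ n, u ∈ (c n).1.1 then (c h.choose).1.2 u else u with hG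
  have Gspec : ∀ n, ∀ u ∈ (c n).1.1, G u = (c n).1.2 u := by
    intro n u hu
    have h : ∃ k, u ∈ (c k).1.1 := ⟨n, hu⟩
    have hk : u ∈ (c h.choose).1.1 := h.choose_spec
    simp only [hG, dif_pos h]
    have h1 := (mono h.choose (max h.choose n) (le_max_left _ _)).2 u hk
    have h2 := (mono n (max h.choose n) (le_max_right _ _)).2 u hu
    rw [← h1, h2]
  have hmemD : ∀ n, ∀ u ∈ (c n).1.1, u ∈ D := fun n u hu => Set.mem_iUnion.2 ⟨n, hu⟩
  have hisoD : ∀ u ∈ D, ∀ v ∈ D, dist (G u) (G v) = dist u v := by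
    intro u hu v hv
    obtain ⟨n, hn⟩ := Set.mem_iUnion.1 hu
    obtain ⟨m, hm⟩ := Set.mem_iUnion.1 hv
    have hn' : u ∈ (c (max n m)).1.1 := (mono n _ (le_max_left n m)).1 hn
    have hm' : v ∈ (c (max n m)).1.1 := (mono m _ (le_max_right n m)).1 hm
    rw [Gspec _ u hn', Gspec _ v hm']
    exact (c (max n m)).2.2.1 u hn' v hm'
  have hfibD : ∀ u ∈ D, π (G u) = π u := by
    intro u hu
    obtain ⟨n, hn⟩ := Set.mem_iUnion.1 hu
    rw [Gspec n u hn]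
    exact (c n).2.2.2.1 u hn
  have hAD : A ⊆ D := fun a ha => hmemD 0 a ha
  have hGA : ∀ a ∈ A, G a = φ a := by
    intro a ha
    rw [Gspec 0 a ha]
    exact (c 0).2.2.2.2.2 a ha
  have hDdense : Dense D := by
    have : Set.range seq ⊆ D := by
      rintro _ ⟨n, rfl⟩; exact hmemD (n + 1) _ (hmem' n)
    exact Dense.mono this hseq
  have hGDdense : Dense (G '' D) := by
    have : Set.range seq ⊆ G '' D := by
      rintro _ ⟨n, rfl⟩
      obtain ⟨w, hw, hws⟩ := himg' n
      exact ⟨w, hmemD (n + 1) w hw, by rw [Gspec (n + 1) w hw]; exact hws⟩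
    exact Dense.mono this hseq
  -- extend G from D to all of U
  have ui : IsUniformInducing ((↑) : D → U) := isometry_subtype_coe.isUniformInducing
  have dr : DenseRange ((↑) : D → U) := hDdense.denseRange_val
  have hf_isom : Isometry (fun d : D => G d) := by
    apply Isometry.of_dist_eq
    intro d d'
    rw [Subtype.dist_eq]
    exact hisoD d d.2 d' d'.2
  set ψ : U → U := (ui.isDenseInducing dr).extend (fun d : D => G d) with hψdef
  have hψc : Continuous ψ :=
    (uniformContinuous_uniformly_extend ui dr hf_isom.uniformContinuous).continuous
  have hψe : ∀ u ∈ D, ψ u = G u := by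
    intro u hu
    exact (ui.isDenseInducing dr).extend_eq hf_isom.continuous ⟨u, hu⟩
  have hψiso : Isometry ψ := by
    apply Isometry.of_dist_eq
    have heq : (fun p : U × U => dist (ψ p.1) (ψ p.2)) = fun p : U × U => dist p.1 p.2 := by
      apply Continuous.ext_on (hDdense.prod hDdense)
      · exact (hψc.comp continuous_fst).dist (hψc.comp continuous_snd)
      · exact continuous_fst.dist continuous_snd
      · rintro ⟨u, v⟩ ⟨hu, hv⟩
        simp only
        rw [hψe u hu, hψe v hv]
        exact hisoD u hu v hv
    intro x y
    exact congrFun heq (x, y)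
  have hψfib : ∀ u : U, π (ψ u) = π u := by
    have heq : (fun u => π (ψ u)) = π := by
      apply Continuous.ext_on hDdense
      · exact hπ.continuous.comp hψc
      · exact hπ.continuous
      · intro u hu
        simp only
        rw [hψe u hu]
        exact hfibD u hu
    exact fun u => congrFun heq u
  have hψA : ∀ a ∈ A, ψ a = φ a := by
    intro a ha
    rw [hψe a (hAD ha), hGA a ha]
  have hsurj : Function.Surjective ψ := by
    have hclosed : IsClosed (Set.range ψ) := hψiso.isClosedEmbedding.isClosed_range
    have hdense : Dense (Set.range ψ) := by
      refine Dense.mono ?_ hGDdense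
      rintro _ ⟨u, hu, rfl⟩
      exact ⟨u, (hψe u hu).symm ▸ rfl⟩
    have : Set.range ψ = Set.univ := by
      rw [← hclosed.closure_eq, hdense.closure_eq]
    intro y
    have : y ∈ Set.range ψ := this ▸ Set.mem_univ y
    exact this
  exact ⟨ψ, ⟨hψiso.injective, hsurj⟩, hψiso, hψA, hψfib⟩
end
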